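/- In the two-alternative QTM (m = 2) with V_1 ≥ V_2, in any pure-strategy Nash equilibrium the aggregate total A_1 satisfies: A_1 ≥ 0, A_1 · e^{2 A_1} ≥ (V_1 − V_2)/(8c), and e^{A_1} ≥ ((V_1 − V_2)/(8c))^{1/3}. -/

import Mathlib

open Real Finset

/-- Softmax selection probabilities of the QTM given aggregate vote totals `A`. -/
noncomputable def softmax {m : ℕ} (A : Fin m → ℝ) (k : Fin m) : ℝ :=
  Real.exp (A k) / ∑ l, Real.exp (A l)

/-- Expected utility of agent `i` in the QTM with parameter `c`, values `v`, and
vote profile `a`. -/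
noncomputable def qtmUtil {n m : ℕ} (c : ℝ) (v : Fin n → Fin m → ℝ)
    (a : Fin n → Fin m → ℝ) (i : Fin n) : ℝ :=
  (∑ k, softmax (fun k => ∑ j, a j k) k * v i k)
    - c * ∑ k, (a i k) ^ 2
    + (c / ((n : ℝ) - 1)) * ∑ j ∈ Finset.univ.erase i, ∑ k, (a j k) ^ 2

/-- Pure-strategy Nash equilibrium of the QTM. -/
def IsNashQTM {n m : ℕ} (c : ℝ) (v : Fin n → Fin m → ℝ)
    (a : Fin n → Fin m → ℝ) : Prop :=
  ∀ (i : Fin n) (b : Fin m → ℝ),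
    qtmUtil c v (Function.update a i b) i ≤ qtmUtil c v a i

/-- If a smooth "softmax payoff minus quadratic cost" function of one real variable
is globally maximized at `x`, then the first-order condition holds at `x`. -/
lemma key_deriv (c s0 E w0 w1 q K x : ℝ) (hE : 0 < E) (g : ℝ → ℝ)
    (hg : ∀ t, g t = Real.exp (t + s0) / (Real.exp (t + s0) + E) * w0
        + E / (Real.exp (t + s0) + E) * w1 - c * (t ^ 2 + q) + K)
    (hmax : ∀ t, g t ≤ g x) :
    Real.exp (x + s0) * E * (w0 - w1) = 2 * c * x * (Real.exp (x + s0) + E) ^ 2 := by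
  have hden : ∀ t : ℝ, Real.exp (t + s0) + E ≠ 0 := fun t => by positivity
  have hu : HasDerivAt (fun t => Real.exp (t + s0)) (Real.exp (x + s0)) x := by
    simpa using ((hasDerivAt_id x).add_const s0).exp
  have hd : HasDerivAt (fun t => Real.exp (t + s0) + E) (Real.exp (x + s0)) x := hu.add_const E
  have h1 : HasDerivAt (fun t => Real.exp (t + s0) / (Real.exp (t + s0) + E))
      ((Real.exp (x + s0) * (Real.exp (x + s0) + E)
        - Real.exp (x + s0) * Real.exp (x + s0)) / (Real.exp (x + s0) + E) ^ 2) x :=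
    hu.div hd (hden x)
  have h2 : HasDerivAt (fun t => E / (Real.exp (t + s0) + E))
      ((0 * (Real.exp (x + s0) + E) - E * Real.exp (x + s0)) / (Real.exp (x + s0) + E) ^ 2) x :=
    (hasDerivAt_const x E).div hd (hden x)
  have h3 : HasDerivAt (fun t : ℝ => t ^ 2) (2 * x) x := by simpa using hasDerivAt_pow 2 x
  have H : HasDerivAt g
      ((Real.exp (x + s0) * (Real.exp (x + s0) + E)
        - Real.exp (x + s0) * Real.exp (x + s0)) / (Real.exp (x + s0) + E) ^ 2 * w0
      + (0 * (Real.exp (x + s0) + E) - E * Real.exp (x + s0)) / (Real.exp (x + s0) + E) ^ 2 * w1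
      - c * (2 * x)) x := by
    have hgf : g = fun t => Real.exp (t + s0) / (Real.exp (t + s0) + E) * w0
        + E / (Real.exp (t + s0) + E) * w1 - c * (t ^ 2 + q) + K := funext hg
    rw [hgf]
    exact (((h1.mul_const w0).add (h2.mul_const w1)).sub ((h3.add_const q).const_mul c)).add_const K
  have hloc : IsLocalMax g x := by
    have hm : IsMaxOn g Set.univ x := fun t _ => hmax t
    exact hm.isLocalMax Filter.univ_mem
  have hzero := hloc.deriv_eq_zero
  rw [H.deriv] at hzero
  have hdx := hden x
  field_simp at hzero
  linear_combination hzero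

lemma sum_update_apply {n : ℕ} (a : Fin n → Fin 2 → ℝ) (i : Fin n) (b : Fin 2 → ℝ) (k : Fin 2) :
    ∑ j, Function.update a i b j k = b k + ∑ j ∈ Finset.univ.erase i, a j k := by
  rw [← Finset.add_sum_erase _ _ (Finset.mem_univ i), Function.update_self]
  congr 1
  refine Finset.sum_congr rfl fun j hj => ?_
  rw [Function.update_of_ne (Finset.ne_of_mem_erase hj)]

lemma util_update_eq {n : ℕ} (c : ℝ) (v : Fin n → Fin 2 → ℝ) (a : Fin n → Fin 2 → ℝ)
    (i : Fin n) (b : Fin 2 → ℝ) :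
    qtmUtil c v (Function.update a i b) i =
      Real.exp (b 0 + ∑ j ∈ Finset.univ.erase i, a j 0) /
        (Real.exp (b 0 + ∑ j ∈ Finset.univ.erase i, a j 0)
          + Real.exp (b 1 + ∑ j ∈ Finset.univ.erase i, a j 1)) * v i 0
      + Real.exp (b 1 + ∑ j ∈ Finset.univ.erase i, a j 1) /
        (Real.exp (b 0 + ∑ j ∈ Finset.univ.erase i, a j 0)
          + Real.exp (b 1 + ∑ j ∈ Finset.univ.erase i, a j 1)) * v i 1
      - c * ((b 0) ^ 2 + (b 1) ^ 2)
      + (c / ((n : ℝ) - 1)) * ∑ j ∈ Finset.univ.erase i, ∑ k, (a j k) ^ 2 := by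
  have h2 : ∑ j ∈ Finset.univ.erase i, ∑ k, (Function.update a i b j k) ^ 2
      = ∑ j ∈ Finset.univ.erase i, ∑ k, (a j k) ^ 2 := by
    refine Finset.sum_congr rfl fun j hj => ?_
    rw [Function.update_of_ne (Finset.ne_of_mem_erase hj)]
  unfold qtmUtil softmax
  rw [h2]
  simp only [Function.update_self, sum_update_apply, Fin.sum_univ_two]

/-- First-order conditions for agent `i` at a Nash equilibrium of the two-alternative QTM. -/
lemma foc {n : ℕ} {c : ℝ} {v a : Fin n → Fin 2 → ℝ}
    (ha : IsNashQTM c v a) (i : Fin n) :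
    Real.exp (∑ j, a j 0) * Real.exp (∑ j, a j 1) * (v i 0 - v i 1)
      = 2 * c * a i 0 * (Real.exp (∑ j, a j 0) + Real.exp (∑ j, a j 1)) ^ 2 ∧
    Real.exp (∑ j, a j 0) * Real.exp (∑ j, a j 1) * (v i 1 - v i 0)
      = 2 * c * a i 1 * (Real.exp (∑ j, a j 0) + Real.exp (∑ j, a j 1)) ^ 2 := by
  set s0 := ∑ j ∈ Finset.univ.erase i, a j 0 with hs0
  set s1 := ∑ j ∈ Finset.univ.erase i, a j 1 with hs1
  have hA0 : ∑ j, a j 0 = a i 0 + s0 := by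
    rw [hs0, ← Finset.add_sum_erase _ _ (Finset.mem_univ i)]
  have hA1 : ∑ j, a j 1 = a i 1 + s1 := by
    rw [hs1, ← Finset.add_sum_erase _ _ (Finset.mem_univ i)]
  constructor
  · have k0 := key_deriv c s0 (Real.exp (a i 1 + s1)) (v i 0) (v i 1) ((a i 1) ^ 2)
      ((c / ((n : ℝ) - 1)) * ∑ j ∈ Finset.univ.erase i, ∑ k, (a j k) ^ 2) (a i 0)
      (Real.exp_pos _)
      (fun t => qtmUtil c v (Function.update a i (Function.update (a i) 0 t)) i)
      (fun t => by
        show qtmUtil c v (Function.update a i (Function.update (a i) 0 t)) i = _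
        rw [util_update_eq]
        simp only [Function.update_self,
          Function.update_of_ne (show (1 : Fin 2) ≠ 0 by decide)]
        rfl)
      (fun t => by
        show qtmUtil c v (Function.update a i (Function.update (a i) 0 t)) i ≤
          qtmUtil c v (Function.update a i (Function.update (a i) 0 (a i 0))) i
        rw [Function.update_eq_self, Function.update_eq_self]
        exact ha i _)
    rw [hA0, hA1]
    exact k0
  · have k1 := key_deriv c s1 (Real.exp (a i 0 + s0)) (v i 1) (v i 0) ((a i 0) ^ 2)
      ((c / ((n : ℝ) - 1)) * ∑ j ∈ Finset.univ.erase i, ∑ k, (a j k) ^ 2) (a i 1)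
      (Real.exp_pos _)
      (fun t => qtmUtil c v (Function.update a i (Function.update (a i) 1 t)) i)
      (fun t => by
        show qtmUtil c v (Function.update a i (Function.update (a i) 1 t)) i = _
        rw [util_update_eq]
        simp only [Function.update_self,
          Function.update_of_ne (show (0 : Fin 2) ≠ 1 by decide)]
        ring)
      (fun t => by
        show qtmUtil c v (Function.update a i (Function.update (a i) 1 t)) i ≤
          qtmUtil c v (Function.update a i (Function.update (a i) 1 (a i 1))) i
        rw [Function.update_eq_self, Function.update_eq_self]
        exact ha i _)
    rw [hA0, hA1]
    linear_combination k1

/-- Pure real-number computation extracting the conclusions from the aggregated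
first-order conditions. -/
lemma main_calc (c : ℝ) (hc : 0 < c)
    (V0 V1 A B : ℝ) (hV : V1 ≤ V0)
    (H0 : Real.exp A * Real.exp B * (V0 - V1) = 2 * c * A * (Real.exp A + Real.exp B) ^ 2)
    (H1 : Real.exp A * Real.exp B * (V1 - V0) = 2 * c * B * (Real.exp A + Real.exp B) ^ 2) :
    0 ≤ A ∧ (V0 - V1) / (8 * c) ≤ A * Real.exp (2 * A) ∧
      ((V0 - V1) / (8 * c)) ^ ((1 : ℝ) / 3) ≤ Real.exp A := by
  have hd : (0 : ℝ) < Real.exp A + Real.exp B := by positivity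
  have hAB : B = -A := by
    have h : 2 * c * (A + B) * (Real.exp A + Real.exp B) ^ 2 = 0 := by
      linear_combination -(H0 + H1)
    have h2 : (0:ℝ) < 2 * c * (Real.exp A + Real.exp B) ^ 2 := by positivity
    nlinarith [h, h2]
  subst hAB
  have h1 : Real.exp A * Real.exp (-A) = 1 := by
    rw [← Real.exp_add]; simp
  have hkey : V0 - V1 = 2 * c * A * (Real.exp A + Real.exp (-A)) ^ 2 := by
    linear_combination H0 - (V0 - V1) * h1
  have hD : 0 ≤ V0 - V1 := sub_nonneg.mpr hV
  have hS : (0:ℝ) < (Real.exp A + Real.exp (-A)) ^ 2 := by positivity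
  have hA0 : 0 ≤ A := by nlinarith [mul_pos hc hS]
  have hle2 : (V0 - V1) / (8 * c) ≤ A * Real.exp (2 * A) := by
    have hle : Real.exp (-A) ≤ Real.exp A := Real.exp_le_exp.mpr (by linarith)
    have e2 : Real.exp (2 * A) = Real.exp A * Real.exp A := by
      rw [← Real.exp_add]; ring_nf
    rw [div_le_iff₀ (by positivity : (0:ℝ) < 8 * c)]
    nlinarith [mul_nonneg (mul_nonneg hc.le hA0)
      (mul_nonneg (sub_nonneg.mpr hle)
        (by positivity : (0:ℝ) ≤ 3 * Real.exp A + Real.exp (-A)))]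
  refine ⟨hA0, hle2, ?_⟩
  have hAe : A ≤ Real.exp A := by linarith [Real.add_one_le_exp A]
  have e2 : Real.exp (2 * A) = Real.exp A * Real.exp A := by
    rw [← Real.exp_add]; ring_nf
  have hstep : (V0 - V1) / (8 * c) ≤ (Real.exp A) ^ 3 := by
    nlinarith [Real.exp_pos A, mul_le_mul_of_nonneg_right hAe (Real.exp_pos (2*A)).le]
  calc ((V0 - V1) / (8 * c)) ^ ((1:ℝ)/3)
      ≤ ((Real.exp A) ^ 3) ^ ((1:ℝ)/3) := by
        apply Real.rpow_le_rpow (by positivity) hstep (by norm_num)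
    _ = Real.exp A := by
        rw [← Real.rpow_natCast (Real.exp A) 3, ← Real.rpow_mul (Real.exp_pos A).le]
        norm_num

theorem stmt8 (n : ℕ) (hn : 2 ≤ n)
    (c : ℝ) (hc : 0 < c)
    (v : Fin n → Fin 2 → ℝ) (hv : ∀ i k, 0 ≤ v i k)
    (hV : ∑ i, v i 1 ≤ ∑ i, v i 0)
    (a : Fin n → Fin 2 → ℝ) (ha : IsNashQTM c v a) :
    0 ≤ ∑ j, a j 0 ∧
    ((∑ i, v i 0) - ∑ i, v i 1) / (8 * c)
      ≤ (∑ j, a j 0) * Real.exp (2 * ∑ j, a j 0) ∧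
    (((∑ i, v i 0) - ∑ i, v i 1) / (8 * c)) ^ ((1 : ℝ) / 3)
      ≤ Real.exp (∑ j, a j 0) := by
  set A := ∑ j, a j 0 with hA
  set B := ∑ j, a j 1 with hB
  have H0 : Real.exp A * Real.exp B * ((∑ i, v i 0) - ∑ i, v i 1)
      = 2 * c * A * (Real.exp A + Real.exp B) ^ 2 := by
    calc Real.exp A * Real.exp B * ((∑ i, v i 0) - ∑ i, v i 1)
        = ∑ i, Real.exp A * Real.exp B * (v i 0 - v i 1) := by
          rw [← Finset.sum_sub_distrib, ← Finset.mul_sum]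
      _ = ∑ i, 2 * c * a i 0 * (Real.exp A + Real.exp B) ^ 2 :=
          Finset.sum_congr rfl fun i _ => (foc ha i).1
      _ = 2 * c * A * (Real.exp A + Real.exp B) ^ 2 := by
          rw [← Finset.sum_mul, ← Finset.mul_sum]
  have H1 : Real.exp A * Real.exp B * ((∑ i, v i 1) - ∑ i, v i 0)
      = 2 * c * B * (Real.exp A + Real.exp B) ^ 2 := by
    calc Real.exp A * Real.exp B * ((∑ i, v i 1) - ∑ i, v i 0)
        = ∑ i, Real.exp A * Real.exp B * (v i 1 - v i 0) := by
          rw [← Finset.sum_sub_distrib, ← Finset.mul_sum]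
      _ = ∑ i, 2 * c * a i 1 * (Real.exp A + Real.exp B) ^ 2 :=
          Finset.sum_congr rfl fun i _ => (foc ha i).2
      _ = 2 * c * B * (Real.exp A + Real.exp B) ^ 2 := by
          rw [← Finset.sum_mul, ← Finset.mul_sum]
  exact main_calc c hc _ _ A B hV H0 H1
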